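/- Let R₁₂₁₂, R₁₃₁₃, R₂₃₂₃, R₁₂₁₃, R₁₂₂₃, R₁₃₂₃ : ℝ³ → ℝ be twice continuously differentiable prescribed functions. If there exist three-times continuously differentiable functions L_{abc} : ℝ³ → ℝ with L_{abc} = −L_{bac} such that F_{abcd} = R_{abcd} on all of ℝ³ for each of the six index combinations (abcd) ∈ {1212, 1313, 2323, 1213, 1223, 1323}, where F_{abcd} := ∂_d L_{abc} − ∂_c L_{abd} + ∂_b L_{cda} − ∂_a L_{cdb}, then the prescribed functions necessarily satisfy the integrability condition ∂₃∂₃R₁₂₁₂ + ∂₂∂₂R₁₃₁₃ + ∂₁∂₁R₂₃₂₃ − 2∂₁∂₂R₁₃₂₃ − 2∂₂∂₃R₁₂₁₃ + 2∂₁∂₃R₁₂₂₃ = 0 at every point of ℝ³. -/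

import Mathlib

/-- Partial derivative of `f : ℝ³ → ℝ` with respect to the `i`-th coordinate,
taken as the derivative along the corresponding coordinate line. -/
noncomputable def pd (i : Fin 3) (f : (Fin 3 → ℝ) → ℝ) : (Fin 3 → ℝ) → ℝ :=
  fun x => deriv (fun t => f (Function.update x i t)) (x i)

/-- The flat-space Riemann-Lanczos expression
`F_{abcd} = ∂_d L_{abc} − ∂_c L_{abd} + ∂_b L_{cda} − ∂_a L_{cdb}`. -/
noncomputable def RLF (L : Fin 3 → Fin 3 → Fin 3 → (Fin 3 → ℝ) → ℝ)
    (a b c d : Fin 3) : (Fin 3 → ℝ) → ℝ :=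
  fun x => pd d (L a b c) x - pd c (L a b d) x + pd b (L c d a) x - pd a (L c d b) x

/-! Partial derivatives commute on C² functions, so `∂ᵢ∂ⱼ F_{abcd}` is the Riemann-Lanczos
expression of `∂ᵢ∂ⱼ L`. Substituting it for `R`, the integrability condition becomes a
combination of third partials of the components of `L`; once the order of differentiation is
normalised, the two contributions of each component cancel. -/

section PartialDerivative

variable {f g : (Fin 3 → ℝ) → ℝ} {x : Fin 3 → ℝ}

theorem pd_eq_fderiv (hf : DifferentiableAt ℝ f x) (i : Fin 3) :
    pd i f x = fderiv ℝ f x (Pi.single i 1) := by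
  have hline : HasDerivAt (fun t => f (Function.update x i t))
      (fderiv ℝ f x (Pi.single i 1)) (x i) := by
    have hf' : HasFDerivAt f (fderiv ℝ f x) (Function.update x i (x i)) := by
      rw [Function.update_eq_self]
      exact hf.hasFDerivAt
    exact hf'.comp_hasDerivAt (x i) (hasDerivAt_update x i (x i))
  exact hline.deriv

theorem pd_fun_add (hf : DifferentiableAt ℝ f x) (hg : DifferentiableAt ℝ g x)
    (i : Fin 3) : pd i (fun y => f y + g y) x = pd i f x + pd i g x := by
  rw [pd_eq_fderiv (f := fun y => f y + g y) (hf.add hg), fderiv_fun_add hf hg,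
    pd_eq_fderiv hf, pd_eq_fderiv hg]
  rfl

theorem pd_fun_sub (hf : DifferentiableAt ℝ f x) (hg : DifferentiableAt ℝ g x)
    (i : Fin 3) : pd i (fun y => f y - g y) x = pd i f x - pd i g x := by
  rw [pd_eq_fderiv (f := fun y => f y - g y) (hf.sub hg), fderiv_fun_sub hf hg,
    pd_eq_fderiv hf, pd_eq_fderiv hg]
  rfl

theorem ContDiff.pd {m n : WithTop ℕ∞} (hf : ContDiff ℝ n f) (hmn : m + 1 ≤ n) (i : Fin 3) :
    ContDiff ℝ m (_root_.pd i f) := by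
  have hf1 : Differentiable ℝ f := hf.differentiable (lt_of_lt_of_le (by simp) hmn).ne'
  rw [show _root_.pd i f = fun x => fderiv ℝ f x (Pi.single i 1) from
    funext fun x => pd_eq_fderiv (hf1 x) i]
  exact (hf.fderiv_right hmn).clm_apply contDiff_const

theorem pd_pd_eq_fderiv_fderiv (hf : ContDiff ℝ 2 f) (i j : Fin 3) (x : Fin 3 → ℝ) :
    pd i (pd j f) x = fderiv ℝ (fderiv ℝ f) x (Pi.single i 1) (Pi.single j 1) := by
  have hf' : ContDiff ℝ 1 (fderiv ℝ f) := hf.fderiv_right (by norm_num)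
  have hpd : pd j f = fun y => fderiv ℝ f y (Pi.single j 1) :=
    funext fun y => pd_eq_fderiv (hf.differentiable two_ne_zero y) j
  rw [hpd, pd_eq_fderiv ((hf'.clm_apply contDiff_const).differentiable one_ne_zero x),
    fderiv_clm_apply (hf'.differentiable one_ne_zero x) (differentiableAt_const _)]
  simp

theorem pd_comm (hf : ContDiff ℝ 2 f) (i j : Fin 3) : pd i (pd j f) = pd j (pd i f) := by
  funext x
  rw [pd_pd_eq_fderiv_fderiv hf, pd_pd_eq_fderiv_fderiv hf]
  exact (hf.contDiffAt.isSymmSndFDerivAt (by simp)).eq _ _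

end PartialDerivative

theorem pd_RLF {L : Fin 3 → Fin 3 → Fin 3 → (Fin 3 → ℝ) → ℝ}
    (hL : ∀ a b c, ContDiff ℝ 2 (L a b c)) (i a b c d : Fin 3) :
    pd i (RLF L a b c d) = RLF (fun a b c => pd i (L a b c)) a b c d := by
  have hD : ∀ a b c j, Differentiable ℝ (pd j (L a b c)) := fun a b c j =>
    ((hL a b c).pd (m := 1) (by norm_num) j).differentiable one_ne_zero
  funext x
  unfold RLF
  rw [pd_fun_sub (by fun_prop) (by fun_prop), pd_fun_add (by fun_prop) (by fun_prop),
    pd_fun_sub (by fun_prop) (by fun_prop)]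
  simp only [pd_comm (hL _ _ _) i]

/-- Index `i ∈ {1,2,3}` of the paper corresponds to `i - 1 : Fin 3`. -/
theorem riemann_lanczos_3d_integrability_general
    (R1212 R1313 R2323 R1213 R1223 R1323 : (Fin 3 → ℝ) → ℝ)
    (h : ∃ L : Fin 3 → Fin 3 → Fin 3 → (Fin 3 → ℝ) → ℝ,
      (∀ a b c, ContDiff ℝ 3 (L a b c)) ∧
      (∀ a b c x, L a b c x = - L b a c x) ∧
      (∀ x, RLF L 0 1 0 1 x = R1212 x) ∧
      (∀ x, RLF L 0 2 0 2 x = R1313 x) ∧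
      (∀ x, RLF L 1 2 1 2 x = R2323 x) ∧
      (∀ x, RLF L 0 1 0 2 x = R1213 x) ∧
      (∀ x, RLF L 0 1 1 2 x = R1223 x) ∧
      (∀ x, RLF L 0 2 1 2 x = R1323 x)) :
    ∀ x : Fin 3 → ℝ,
      pd 2 (pd 2 R1212) x + pd 1 (pd 1 R1313) x + pd 0 (pd 0 R2323) x
        - 2 * pd 0 (pd 1 R1323) x - 2 * pd 1 (pd 2 R1213) x
        + 2 * pd 0 (pd 2 R1223) x = 0 := by
  obtain ⟨L, hL, -, h1212, h1313, h2323, h1213, h1223, h1323⟩ := h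
  obtain rfl : R1212 = RLF L 0 1 0 1 := funext fun x => (h1212 x).symm
  obtain rfl : R1313 = RLF L 0 2 0 2 := funext fun x => (h1313 x).symm
  obtain rfl : R2323 = RLF L 1 2 1 2 := funext fun x => (h2323 x).symm
  obtain rfl : R1213 = RLF L 0 1 0 2 := funext fun x => (h1213 x).symm
  obtain rfl : R1223 = RLF L 0 1 1 2 := funext fun x => (h1223 x).symm
  obtain rfl : R1323 = RLF L 0 2 1 2 := funext fun x => (h1323 x).symm
  have hL2 : ∀ a b c, ContDiff ℝ 2 (L a b c) := fun a b c => (hL a b c).of_le (by norm_num)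
  have hL2' : ∀ j a b c, ContDiff ℝ 2 (pd j (L a b c)) := fun j a b c =>
    (hL a b c).pd (by norm_num) j
  intro x
  simp only [pd_RLF hL2, pd_RLF (hL2' _)]
  unfold RLF
  -- `pd_comm` is a permutation lemma, so `simp` sorts the three derivatives into one order.
  simp only [pd_comm (hL2' _ _ _ _), pd_comm (hL2 _ _ _)]
  ring

/-- If the flat 3-dimensional Riemann-Lanczos problem `F_{abcd} = R_{abcd}` (for the six
independent index combinations 1212, 1313, 2323, 1213, 1223, 1323) has a solution `L` of
class C³ with `L_{abc} = −L_{bac}`, then the prescribed C² functions `R_{abcd}` satisfy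
the integrability condition
`∂₃∂₃R₁₂₁₂ + ∂₂∂₂R₁₃₁₃ + ∂₁∂₁R₂₃₂₃ − 2∂₁∂₂R₁₃₂₃ − 2∂₂∂₃R₁₂₁₃ + 2∂₁∂₃R₁₂₂₃ = 0`.
Index `i ∈ {1,2,3}` of the paper corresponds to `i - 1 : Fin 3`. -/
theorem riemann_lanczos_3d_integrability
    (R1212 R1313 R2323 R1213 R1223 R1323 : (Fin 3 → ℝ) → ℝ)
    (hR1212 : ContDiff ℝ 2 R1212) (hR1313 : ContDiff ℝ 2 R1313)
    (hR2323 : ContDiff ℝ 2 R2323) (hR1213 : ContDiff ℝ 2 R1213)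
    (hR1223 : ContDiff ℝ 2 R1223) (hR1323 : ContDiff ℝ 2 R1323)
    (h : ∃ L : Fin 3 → Fin 3 → Fin 3 → (Fin 3 → ℝ) → ℝ,
      (∀ a b c, ContDiff ℝ 3 (L a b c)) ∧
      (∀ a b c x, L a b c x = - L b a c x) ∧
      (∀ x, RLF L 0 1 0 1 x = R1212 x) ∧
      (∀ x, RLF L 0 2 0 2 x = R1313 x) ∧
      (∀ x, RLF L 1 2 1 2 x = R2323 x) ∧
      (∀ x, RLF L 0 1 0 2 x = R1213 x) ∧
      (∀ x, RLF L 0 1 1 2 x = R1223 x) ∧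
      (∀ x, RLF L 0 2 1 2 x = R1323 x)) :
    ∀ x : Fin 3 → ℝ,
      pd 2 (pd 2 R1212) x + pd 1 (pd 1 R1313) x + pd 0 (pd 0 R2323) x
        - 2 * pd 0 (pd 1 R1323) x - 2 * pd 1 (pd 2 R1213) x
        + 2 * pd 0 (pd 2 R1223) x = 0 :=
  riemann_lanczos_3d_integrability_general R1212 R1313 R2323 R1213 R1223 R1323 h
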